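/- (Theorem 2, minimality.) The function q(y) := sup_{n ∈ ℕ₀} q_n(y) is the smallest nonnegative fixed point of D: every function p : ℝ^d → ℝ with p ≥ 0 pointwise and D p = p satisfies q ≤ p pointwise. -/

import Mathlib

open Finset

/-- The weighted arithmetic average operator:
`(A f)(y) = ∑ k, α k * f (y - x k)`. -/
noncomputable def avgOp (d m : ℕ) (α : Fin m → ℝ) (x : Fin m → (Fin d → ℝ))
    (f : (Fin d → ℝ) → ℝ) : (Fin d → ℝ) → ℝ :=
  fun y => ∑ k, α k * f (y - x k)

/-- The Bermudan iteration operator: `(D f)(y) = max (c * (A f)(y)) (g y)`. -/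
noncomputable def bermOp (d m : ℕ) (α : Fin m → ℝ) (x : Fin m → (Fin d → ℝ))
    (c : ℝ) (g : (Fin d → ℝ) → ℝ) (f : (Fin d → ℝ) → ℝ) : (Fin d → ℝ) → ℝ :=
  fun y => max (c * avgOp d m α x f y) (g y)

/-!
With nonnegative weights `α` and `c`, the operator `D` is monotone. A fixed point `p ≥ 0`
satisfies `p = max (c * A p) g ≥ g`, so it dominates the starting function `max g 0`;
by monotonicity every iterate `q n = D^[n] (max g 0)` then lies below `D^[n] p = p`.
-/

section

variable {d m : ℕ} {α : Fin m → ℝ} {c : ℝ}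

theorem avgOp_mono (hα : ∀ k, 0 ≤ α k) (x : Fin m → (Fin d → ℝ)) :
    Monotone (avgOp d m α x) := fun _ _ hf _ =>
  sum_le_sum fun k _ => mul_le_mul_of_nonneg_left (hf _) (hα k)

theorem bermOp_mono (hα : ∀ k, 0 ≤ α k) (x : Fin m → (Fin d → ℝ)) (hc : 0 ≤ c)
    (g : (Fin d → ℝ) → ℝ) : Monotone (bermOp d m α x c g) := fun _ _ hf y =>
  max_le_max (mul_le_mul_of_nonneg_left (avgOp_mono hα x hf y) hc) le_rfl

theorem le_of_isFixedPt_bermOp {x : Fin m → (Fin d → ℝ)} {g p : (Fin d → ℝ) → ℝ}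
    (hp : Function.IsFixedPt (bermOp d m α x c g) p) : g ≤ p := fun _ =>
  hp ▸ le_max_right _ _

end

theorem qsup_smallest_fixed_point_general (d m : ℕ)
    (α : Fin m → ℝ) (hα : ∀ k, α k ∈ Set.Icc (0:ℝ) 1)
    (x : Fin m → (Fin d → ℝ))
    (c : ℝ) (hc : c ∈ Set.Ioo (0:ℝ) 1)
    (g : (Fin d → ℝ) → ℝ)
    (q : ℕ → (Fin d → ℝ) → ℝ)
    (hq : ∀ n, q n = (bermOp d m α x c g)^[n] (fun y => max (g y) 0))
    (qsup : (Fin d → ℝ) → ℝ) (hqsup : ∀ y, qsup y = ⨆ n : ℕ, q n y)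
    (p : (Fin d → ℝ) → ℝ) (hp0 : ∀ y, 0 ≤ p y)
    (hpfix : ∀ y, bermOp d m α x c g p y = p y) :
    ∀ y, qsup y ≤ p y := by
  have hmono := bermOp_mono (fun k => (hα k).1) x hc.1.le g
  have hfix : Function.IsFixedPt (bermOp d m α x c g) p := funext hpfix
  have hstart : (fun y => max (g y) 0) ≤ p := fun y =>
    max_le (le_of_isFixedPt_bermOp hfix y) (hp0 y)
  intro y
  rw [hqsup]
  refine ciSup_le fun n => ?_
  rw [hq]
  exact (hmono.iterate n hstart).trans_eq (hfix.iterate n) y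

/-- Theorem 2, minimality: `q = ⨆ n, q_n` is the smallest
nonnegative fixed point of `D`. -/
theorem qsup_smallest_fixed_point (d m : ℕ) (hm : 1 ≤ m)
    (α : Fin m → ℝ) (hα : ∀ k, α k ∈ Set.Icc (0:ℝ) 1) (hsum : ∑ k, α k = 1)
    (x : Fin m → (Fin d → ℝ))
    (c : ℝ) (hc : c ∈ Set.Ioo (0:ℝ) 1)
    (g h : (Fin d → ℝ) → ℝ)
    (hg : ∀ y, g y ≤ avgOp d m α x g y)
    (hh : ∀ y, avgOp d m α x h y = h y)
    (hgh : ∀ y, max 0 (g y) ≤ h y)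
    (q : ℕ → (Fin d → ℝ) → ℝ)
    (hq : ∀ n, q n = (bermOp d m α x c g)^[n] (fun y => max (g y) 0))
    (qsup : (Fin d → ℝ) → ℝ) (hqsup : ∀ y, qsup y = ⨆ n : ℕ, q n y)
    (p : (Fin d → ℝ) → ℝ) (hp0 : ∀ y, 0 ≤ p y)
    (hpfix : ∀ y, bermOp d m α x c g p y = p y) :
    ∀ y, qsup y ≤ p y :=
  qsup_smallest_fixed_point_general d m α hα x c hc g q hq qsup hqsup p hp0 hpfix
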